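/- arXiv:1304.6574 — 3 statements merged into one kernel-verified Lean document; each statement's English description precedes it below -/
import Mathlib

section
/- Let L be a function from BCCSP processes to a set Λ of local observations for which there exist functions a^L : Λ → Λ (one for each a ∈ Act) and +^L : Λ × Λ → Λ such that L(a·p) = a^L(L(p)) and L(p + q) = L(p) +^L L(q) for all processes p, q. Then: (i) BGO_L(a·p) = {⟨a^L(L(p)), {(a, b) | b ∈ B}⟩ | B ⊆ BGO_L(p)}; and (ii) BGO_L(p + q) = {⟨L(p) +^L L(q), S1 ∪ S2⟩ | ⟨L(p), S1⟩ ∈ BGO_L(p) and ⟨L(q), S2⟩ ∈ BGO_L(q)}. -/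
/-- BCCSP processes over a set `Act` of actions. -/
inductive Proc (Act : Type) : Type where
  | nil : Proc Act
  | pre : Act → Proc Act → Proc Act
  | choice : Proc Act → Proc Act → Proc Act

/-- The transition relation of BCCSP. -/
inductive Proc.Step {Act : Type} : Proc Act → Act → Proc Act → Prop where
  | pre (a : Act) (p : Proc Act) : Proc.Step (Proc.pre a p) a p
  | left {p p' : Proc Act} {a : Act} (q : Proc Act) :
      Proc.Step p a p' → Proc.Step (Proc.choice p q) a p'
  | right (p : Proc Act) {q q' : Proc Act} {a : Act} :
      Proc.Step q a q' → Proc.Step (Proc.choice p q) a q'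

/-- The initial offer of a process. -/
def Proc.initials {Act : Type} (p : Proc Act) : Set Act :=
  {a | ∃ p', Proc.Step p a p'}

/-- Branching general observations: finite trees with nodes labeled in `Λ`
and arcs labeled by actions in `Act`. -/
inductive Obs (Act Λ : Type) : Type where
  | node : Λ → List (Act × Obs Act Λ) → Obs Act Λ

/-- Membership `b ∈ BGO_L(p)`:
`BGO_L(p) = {⟨L(p), S⟩ | S ⊆ {(a, b) | p →a p', b ∈ BGO_L(p')}}`. -/
def InBGO {Act Λ : Type} (L : Proc Act → Λ) : Obs Act Λ → Proc Act → Prop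
  | Obs.node l S, p =>
      l = L p ∧ ∀ a b, (a, b) ∈ S → ∃ p', Proc.Step p a p' ∧ InBGO L b p'
termination_by b _ => sizeOf b
decreasing_by
  have h1 : sizeOf (a, b) < sizeOf S := List.sizeOf_lt_of_mem (by assumption)
  simp at h1 ⊢
  omega

/-!
Every transition of `a·p` is `a·p →a p`, and the transitions of `p + q` are those of `p` and
of `q`. So an observation of `a·p` is a list of `a`-arcs into observations of `p`, and the
arc list of an observation of `p + q` splits, by filtering, into an arc list for `p` and one
for `q`; compositionality of `L` then rewrites the root labels.
-/

theorem inBGO_node {Act Λ : Type} {L : Proc Act → Λ} {l : Λ} {S : List (Act × Obs Act Λ)}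
    {p : Proc Act} :
    InBGO L (Obs.node l S) p ↔
      l = L p ∧ ∀ a b, (a, b) ∈ S → ∃ p', Proc.Step p a p' ∧ InBGO L b p' := by
  rw [InBGO]

namespace Proc

variable {Act : Type}

theorem step_pre_iff {a a' : Act} {p p' : Proc Act} :
    Step (pre a p) a' p' ↔ a' = a ∧ p' = p := by
  constructor
  · rintro ⟨⟩
    exact ⟨rfl, rfl⟩
  · rintro ⟨rfl, rfl⟩
    exact .pre a' p'

theorem step_choice_iff {p q r : Proc Act} {a : Act} :
    Step (choice p q) a r ↔ Step p a r ∨ Step q a r := by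
  constructor
  · rintro (_ | ⟨_, h⟩ | ⟨_, h⟩)
    · exact .inl h
    · exact .inr h
  · rintro (h | h)
    · exact .left q h
    · exact .right p h

end Proc

theorem List.exists_cover_of_forall_or {α : Type*} {P Q : α → Prop} {S : List α}
    (h : ∀ x ∈ S, P x ∨ Q x) :
    ∃ S₁ S₂ : List α, (∀ x, x ∈ S ↔ x ∈ S₁ ∨ x ∈ S₂) ∧ (∀ x ∈ S₁, P x) ∧ ∀ x ∈ S₂, Q x := by
  classical
  refine ⟨S.filter (P ·), S.filter (¬P ·), fun x => ?_, fun x hx => ?_, fun x hx => ?_⟩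
  · simp only [List.mem_filter, decide_eq_true_eq]
    tauto
  · exact of_decide_eq_true (List.mem_filter.mp hx).2
  · obtain ⟨hxS, hxP⟩ := List.mem_filter.mp hx
    exact (h x hxS).resolve_left (of_decide_eq_true hxP)

theorem List.eq_map_pair_of_forall_fst_eq {α β : Type*} {a : α} {S : List (α × β)}
    (h : ∀ x ∈ S, x.1 = a) : S = (S.map Prod.snd).map (a, ·) := by
  rw [List.map_map]
  conv_lhs => rw [← List.map_id S]
  exact List.map_congr_left fun x hx => by rw [← h x hx]; rfl

section

variable {Act Λ : Type} (L : Proc Act → Λ)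

theorem inBGO_pre_iff (a : Act) (p : Proc Act) (b : Obs Act Λ) :
    InBGO L b (.pre a p) ↔ ∃ B : List (Obs Act Λ), (∀ c ∈ B, InBGO L c p) ∧
      b = .node (L (.pre a p)) (B.map (a, ·)) := by
  obtain ⟨l, S⟩ := b
  simp only [inBGO_node, Proc.step_pre_iff]
  constructor
  · rintro ⟨rfl, hS⟩
    have hfst : ∀ x ∈ S, x.1 = a := fun x hx => by
      obtain ⟨_, ⟨h, -⟩, -⟩ := hS x.1 x.2 hx
      exact h
    refine ⟨S.map Prod.snd, ?_, ?_⟩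
    · simp only [List.mem_map]
      rintro _ ⟨x, hx, rfl⟩
      obtain ⟨_, ⟨-, rfl⟩, hc⟩ := hS x.1 x.2 hx
      exact hc
    · rw [← List.eq_map_pair_of_forall_fst_eq hfst]
  · rintro ⟨B, hB, ⟨⟩⟩
    refine ⟨rfl, fun a' c hc => ?_⟩
    obtain ⟨c, hcB, ⟨⟩⟩ := List.mem_map.mp hc
    exact ⟨p, ⟨rfl, rfl⟩, hB c hcB⟩

theorem inBGO_choice_iff (p q : Proc Act) (b : Obs Act Λ) :
    InBGO L b (.choice p q) ↔ ∃ S S₁ S₂ : List (Act × Obs Act Λ),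
      InBGO L (.node (L p) S₁) p ∧ InBGO L (.node (L q) S₂) q ∧
      (∀ x, x ∈ S ↔ x ∈ S₁ ∨ x ∈ S₂) ∧ b = .node (L (.choice p q)) S := by
  obtain ⟨l, S⟩ := b
  simp only [inBGO_node, Proc.step_choice_iff, true_and, Obs.node.injEq]
  constructor
  · rintro ⟨rfl, hS⟩
    have hsplit : ∀ x ∈ S, (∃ r, Proc.Step p x.1 r ∧ InBGO L x.2 r) ∨
        ∃ r, Proc.Step q x.1 r ∧ InBGO L x.2 r := fun x hx => by
      obtain ⟨r, hr | hr, hc⟩ := hS x.1 x.2 hx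
      exacts [.inl ⟨r, hr, hc⟩, .inr ⟨r, hr, hc⟩]
    obtain ⟨S₁, S₂, hcover, h₁, h₂⟩ := List.exists_cover_of_forall_or hsplit
    exact ⟨S, S₁, S₂, fun a c hc => h₁ (a, c) hc, fun a c hc => h₂ (a, c) hc, hcover, rfl, rfl⟩
  · rintro ⟨_, S₁, S₂, h₁, h₂, hcover, rfl, rfl⟩
    refine ⟨rfl, fun a c hc => ?_⟩
    rcases (hcover (a, c)).mp hc with hc | hc
    · obtain ⟨r, hr, hcr⟩ := h₁ a c hc
      exact ⟨r, .inl hr, hcr⟩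
    · obtain ⟨r, hr, hcr⟩ := h₂ a c hc
      exact ⟨r, .inr hr, hcr⟩

end

/-- compositional characterization of branching general
observations for a compositional local observation function `L`. -/
theorem stmt1 {Act Λ : Type} (L : Proc Act → Λ)
    (actL : Act → Λ → Λ) (addL : Λ → Λ → Λ)
    (hpre : ∀ (a : Act) (p : Proc Act), L (Proc.pre a p) = actL a (L p))
    (hadd : ∀ p q : Proc Act, L (Proc.choice p q) = addL (L p) (L q)) :
    (∀ (a : Act) (p : Proc Act),
      {b | InBGO L b (Proc.pre a p)} =
        {b | ∃ B : List (Obs Act Λ), (∀ c ∈ B, InBGO L c p) ∧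
              b = Obs.node (actL a (L p)) (B.map (fun c => (a, c)))}) ∧
    (∀ p q : Proc Act,
      {b | InBGO L b (Proc.choice p q)} =
        {b | ∃ (S S₁ S₂ : List (Act × Obs Act Λ)),
              InBGO L (Obs.node (L p) S₁) p ∧ InBGO L (Obs.node (L q) S₂) q ∧
              (∀ x, x ∈ S ↔ x ∈ S₁ ∨ x ∈ S₂) ∧
              b = Obs.node (addL (L p) (L q)) S}) := by
  refine ⟨fun a p => Set.ext fun b => ?_, fun p q => Set.ext fun b => ?_⟩
  · simpa only [Set.mem_ofPred_eq, hpre] using inBGO_pre_iff L a p b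
  · simpa only [Set.mem_ofPred_eq, hadd] using inBGO_choice_iff L p q b
end

section
/- Soundness and completeness of the unified axiomatizations: for each Z ∈ {RT, FT, R, F} and all closed BCCSP processes p and q, LGO_I(p) ≤^{l(Z)} LGO_I(q) if and only if p ≼ q is derivable from the axiom system {B1, B2, B3, B4, (RS), (ND^Z)}; here ≤^{l(RT)} is set inclusion LGO_I(p) ⊆ LGO_I(q), ≤^{l(FT)} = ≤^{l⊇}, ≤^{l(R)} = ≤^{lf}, and ≤^{l(F)} = ≤^{lf⊇}. -/
/-- A linear general observation `l₀ a₁ l₁ … aₙ lₙ` is encoded as the pair of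
its initial label `l₀` and the list `[(a₁,l₁),…,(aₙ,lₙ)]`. -/
abbrev LObs (Act Λ : Type) : Type := Λ × List (Act × Λ)

/-- Membership `o ∈ LGO_L(p)`: `⟨L(p)⟩ ∈ LGO_L(p)`, and
`⟨L(p), a⟩ ∘ t ∈ LGO_L(p)` whenever `p →a p'` and `t ∈ LGO_L(p')`. -/
inductive InLGO {Act Λ : Type} (L : Proc Act → Λ) : LObs Act Λ → Proc Act → Prop where
  | nil (p : Proc Act) : InLGO L (L p, []) p
  | cons {p p' : Proc Act} {a : Act} {t : LObs Act Λ} :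
      Proc.Step p a p' → InLGO L t p' → InLGO L (L p, (a, t.1) :: t.2) p

/-- The sequence of actions `a₁ … aₙ` of a linear observation. -/
def obsActs {Act Λ : Type} (o : LObs Act Λ) : List Act := o.2.map Prod.fst

/-- The final local observation `lₙ` of a linear observation. -/
def obsFinal {Act Λ : Type} (o : LObs Act Λ) : Λ := (o.2.map Prod.snd).getLastD o.1

/-- Ground inequational derivability from an axiom system `E`:
reflexivity, transitivity, and congruence w.r.t. prefix and choice. -/
inductive Deriv {Act : Type} (E : Proc Act → Proc Act → Prop) :
    Proc Act → Proc Act → Prop where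
  | ax {p q : Proc Act} : E p q → Deriv E p q
  | refl (p : Proc Act) : Deriv E p p
  | trans {p q r : Proc Act} : Deriv E p q → Deriv E q r → Deriv E p r
  | pre (a : Act) {p q : Proc Act} : Deriv E p q → Deriv E (Proc.pre a p) (Proc.pre a q)
  | add {p q p' q' : Proc Act} : Deriv E p q → Deriv E p' q' →
      Deriv E (Proc.choice p p') (Proc.choice q q')

/-- The axioms B1–B4 (as pairs of inequations) together with the
ready-simulation axiom (RS): `p ≼ p + q` whenever `I(p) = I(q)`. -/
inductive BaseAx {Act : Type} : Proc Act → Proc Act → Prop where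
  | B1 (p q : Proc Act) : BaseAx (Proc.choice p q) (Proc.choice q p)
  | B2l (p q r : Proc Act) :
      BaseAx (Proc.choice (Proc.choice p q) r) (Proc.choice p (Proc.choice q r))
  | B2r (p q r : Proc Act) :
      BaseAx (Proc.choice p (Proc.choice q r)) (Proc.choice (Proc.choice p q) r)
  | B3l (p : Proc Act) : BaseAx (Proc.choice p p) p
  | B3r (p : Proc Act) : BaseAx p (Proc.choice p p)
  | B4l (p : Proc Act) : BaseAx (Proc.choice p Proc.nil) p
  | B4r (p : Proc Act) : BaseAx p (Proc.choice p Proc.nil)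
  | RS (p q : Proc Act) : Proc.initials p = Proc.initials q →
      BaseAx p (Proc.choice p q)

/-- The scheme (ND): `a(p + q) ≼ ap + a(q + r)` whenever `M(p, q, r)`. -/
def NDax {Act : Type} (M : Proc Act → Proc Act → Proc Act → Prop) :
    Proc Act → Proc Act → Prop := fun s t =>
  ∃ (a : Act) (p q r : Proc Act), M p q r ∧
    s = Proc.pre a (Proc.choice p q) ∧
    t = Proc.choice (Proc.pre a p) (Proc.pre a (Proc.choice q r))

/-- The constraint for failures. -/
def M_F {Act : Type} : Proc Act → Proc Act → Proc Act → Prop := fun _ _ _ => True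

/-- The constraint for readiness. -/
def M_R {Act : Type} : Proc Act → Proc Act → Proc Act → Prop := fun p q _ =>
  Proc.initials q ⊆ Proc.initials p

/-- The constraint for failure traces. -/
def M_FT {Act : Type} : Proc Act → Proc Act → Proc Act → Prop := fun _ q r =>
  Proc.initials r ⊆ Proc.initials q

/-- The constraint for ready traces. -/
def M_RT {Act : Type} : Proc Act → Proc Act → Proc Act → Prop := fun p q r =>
  Proc.initials p = Proc.initials q ∧ Proc.initials r ⊆ Proc.initials q

/-- The pointwise order on linear observations over `Set Act`:
same action sequence and `Xᵢ ⊇ Yᵢ` at every position. -/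
def obsGe {Act : Type} (o o' : LObs Act (Set Act)) : Prop :=
  o'.1 ⊆ o.1 ∧ List.Forall₂ (fun x y => x.1 = y.1 ∧ y.2 ⊆ x.2) o.2 o'.2

/-!
Soundness holds because every axiom instance relates processes whose linear observations can be
matched position by position in the way the semantics prescribes, and this matching is preserved
by prefixing and choice.

Completeness rests on one claim, proved by induction on `p`: if every observation of `p` is
matched by an observation of one of `q₁, …, qₙ`, then `a·p ≼ a·q₁ + ⋯ + a·qₙ`. Fix a `qᵢ` that
matches the empty observation of `p` and discard the `qⱼ` whose offer is incompatible with `I(p)`.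
Expanding `p` into its summands `b·p'` and applying the induction hypothesis to the
`b`-derivatives of the remaining `qⱼ` yields `p ≼ Σⱼ qⱼ|I(p)`, where `q|A` keeps the summands of
`q` with an action in `A`. Since `qⱼ|I(p) + qⱼ = qⱼ`, each application of (ND) splits one more
`a·(qⱼ|I(p) + qⱼ)` off `a·Σⱼ qⱼ|I(p)`; the choice of `qᵢ` and the discarding make its side
condition hold.
For `p ≼ q` itself, `p ≼ q|I(p) ≼ q|I(p) + q = q` by (RS), as `I(q) ⊆ I(p)`.
-/

namespace Proc

variable {Act : Type}

def summands : Proc Act → List (Act × Proc Act)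
  | nil => []
  | pre a p => [(a, p)]
  | choice p q => summands p ++ summands q

def sum : List (Proc Act) → Proc Act
  | [] => nil
  | p :: l => choice p (sum l)

@[simp] lemma summands_nil : (nil : Proc Act).summands = [] := rfl

@[simp] lemma summands_pre (a : Act) (p : Proc Act) : (pre a p).summands = [(a, p)] := rfl

@[simp] lemma summands_choice (p q : Proc Act) :
    (choice p q).summands = p.summands ++ q.summands := rfl

@[simp] lemma summands_sum (l : List (Proc Act)) : (sum l).summands = l.flatMap summands := by
  induction l <;> simp [sum, *]

lemma step_iff_mem_summands {p p' : Proc Act} {a : Act} : Step p a p' ↔ (a, p') ∈ p.summands := by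
  refine ⟨fun h => by induction h <;> simp [*], fun h => ?_⟩
  induction p with
  | nil => simp at h
  | pre b q => obtain ⟨rfl, rfl⟩ := List.mem_singleton.mp h; exact .pre _ _
  | choice p q ihp ihq => exact (List.mem_append.mp h).elim (.left _ ∘ ihp) (.right _ ∘ ihq)

lemma mem_initials_iff {p : Proc Act} {a : Act} : a ∈ p.initials ↔ ∃ p', (a, p') ∈ p.summands :=
  exists_congr fun _ => step_iff_mem_summands

@[simp] lemma initials_pre (a : Act) (p : Proc Act) : (pre a p).initials = {a} := by
  ext; simp [mem_initials_iff]

@[simp] lemma initials_choice (p q : Proc Act) :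
    (choice p q).initials = p.initials ∪ q.initials := by
  ext; simp [mem_initials_iff, exists_or]

lemma mem_initials_sum {l : List (Proc Act)} {a : Act} :
    a ∈ (sum l).initials ↔ ∃ s ∈ l, a ∈ s.initials := by
  simp only [mem_initials_iff, summands_sum, List.mem_flatMap]
  tauto

lemma sizeOf_lt_of_step {p p' : Proc Act} {a : Act} (h : Step p a p') : sizeOf p' < sizeOf p := by
  induction h <;> simp <;> omega

open Classical in
noncomputable def restrict (A : Set Act) : Proc Act → Proc Act
  | nil => nil
  | pre a p => if a ∈ A then pre a p else nil
  | choice p q => choice (restrict A p) (restrict A q)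

lemma mem_summands_restrict {A : Set Act} {p : Proc Act} {x : Act × Proc Act} :
    x ∈ (restrict A p).summands ↔ x ∈ p.summands ∧ x.1 ∈ A := by
  induction p with
  | nil => simp [restrict]
  | pre a q => by_cases ha : a ∈ A <;> simp [restrict, ha] <;> aesop
  | choice p q ihp ihq => simp [restrict, ihp, ihq, or_and_right]

lemma initials_restrict (A : Set Act) (p : Proc Act) :
    (restrict A p).initials = p.initials ∩ A := by
  ext; simp [mem_initials_iff, mem_summands_restrict]

open Classical in
noncomputable def derivs (a : Act) (p : Proc Act) : List (Proc Act) :=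
  (p.summands.filter (·.1 = a)).map Prod.snd

lemma mem_derivs {a : Act} {p p' : Proc Act} : p' ∈ p.derivs a ↔ Step p a p' := by
  simp [derivs, step_iff_mem_summands]

def lgo (p : Proc Act) : Set (LObs Act (Set Act)) := {o | InLGO initials o p}

lemma nil_mem_lgo (p : Proc Act) : (p.initials, []) ∈ p.lgo := InLGO.nil p

@[simp] lemma mem_lgo_nil_iff {p : Proc Act} {X : Set Act} : (X, []) ∈ p.lgo ↔ X = p.initials := by
  refine ⟨fun h => ?_, by rintro rfl; exact nil_mem_lgo p⟩
  cases h; rfl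

@[simp] lemma mem_lgo_cons_iff {p : Proc Act} {X l : Set Act} {a : Act} {t : List (Act × Set Act)} :
    (X, (a, l) :: t) ∈ p.lgo ↔ X = p.initials ∧ ∃ p', Step p a p' ∧ (l, t) ∈ p'.lgo := by
  constructor
  · rintro (_ | ⟨hs, ht⟩)
    exact ⟨rfl, _, hs, ht⟩
  · rintro ⟨rfl, p', hs, ht⟩
    exact InLGO.cons (t := (l, t)) hs ht

lemma lgo_eq_of_summands_subset_of_subset {p q : Proc Act} (h : p.summands ⊆ q.summands)
    (h' : q.summands ⊆ p.summands) : p.lgo = q.lgo := by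
  have hI : p.initials = q.initials := by
    ext; simp only [mem_initials_iff]
    exact ⟨fun ⟨r, hr⟩ => ⟨r, h hr⟩, fun ⟨r, hr⟩ => ⟨r, h' hr⟩⟩
  ext ⟨X, _ | ⟨⟨a, l⟩, t⟩⟩
  · simp [hI]
  · simp only [mem_lgo_cons_iff, step_iff_mem_summands, hI]
    exact and_congr_right fun _ =>
      ⟨fun ⟨r, hr, ht⟩ => ⟨r, h hr, ht⟩, fun ⟨r, hr, ht⟩ => ⟨r, h' hr, ht⟩⟩

lemma mem_lgo_choice_cons_iff {p q : Proc Act} {X l : Set Act} {a : Act}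
    {t : List (Act × Set Act)} :
    (X, (a, l) :: t) ∈ (choice p q).lgo ↔
      X = p.initials ∪ q.initials ∧
        ((p.initials, (a, l) :: t) ∈ p.lgo ∨ (q.initials, (a, l) :: t) ∈ q.lgo) := by
  simp only [mem_lgo_cons_iff, initials_choice, true_and, step_iff_mem_summands, summands_choice,
    List.mem_append, or_and_right, exists_or]

lemma lgo_subset_choice_of_initials_eq {p q : Proc Act} (h : p.initials = q.initials) :
    p.lgo ⊆ (choice p q).lgo := by
  rintro ⟨X, _ | ⟨⟨a, l⟩, t⟩⟩ ho
  · simp_all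
  · obtain rfl := (mem_lgo_cons_iff.mp ho).1
    exact mem_lgo_choice_cons_iff.mpr ⟨by simp [h], .inl ho⟩

end Proc

section Derivation

variable {Act : Type} {E : Proc Act → Proc Act → Prop}

def DerivEq (E : Proc Act → Proc Act → Prop) (p q : Proc Act) : Prop :=
  Deriv E p q ∧ Deriv E q p

namespace DerivEq

lemma refl (p : Proc Act) : DerivEq E p p := ⟨.refl p, .refl p⟩

lemma symm {p q : Proc Act} (h : DerivEq E p q) : DerivEq E q p := ⟨h.2, h.1⟩

lemma trans {p q r : Proc Act} (h : DerivEq E p q) (h' : DerivEq E q r) : DerivEq E p r :=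
  ⟨h.1.trans h'.1, h'.2.trans h.2⟩

lemma add {p q p' q' : Proc Act} (h : DerivEq E p q) (h' : DerivEq E p' q') :
    DerivEq E (.choice p p') (.choice q q') := ⟨h.1.add h'.1, h.2.add h'.2⟩

end DerivEq

lemma Deriv.sum_map {α : Type} {l : List α} {f g : α → Proc Act}
    (h : ∀ x ∈ l, Deriv E (f x) (g x)) :
    Deriv E (Proc.sum (l.map f)) (Proc.sum (l.map g)) := by
  induction l with
  | nil => exact .refl _
  | cons x l ih => exact (h x (by simp)).add (ih fun y hy => h y (by simp [hy]))

variable (hB : ∀ {s t : Proc Act}, BaseAx s t → E s t)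
include hB

namespace DerivEq

lemma add_comm (p q : Proc Act) : DerivEq E (.choice p q) (.choice q p) :=
  ⟨.ax (hB (.B1 p q)), .ax (hB (.B1 q p))⟩

lemma add_assoc (p q r : Proc Act) :
    DerivEq E (.choice (.choice p q) r) (.choice p (.choice q r)) :=
  ⟨.ax (hB (.B2l p q r)), .ax (hB (.B2r p q r))⟩

lemma add_self (p : Proc Act) : DerivEq E (.choice p p) p :=
  ⟨.ax (hB (.B3l p)), .ax (hB (.B3r p))⟩

lemma add_nil (p : Proc Act) : DerivEq E (.choice p .nil) p :=
  ⟨.ax (hB (.B4l p)), .ax (hB (.B4r p))⟩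

lemma nil_add (p : Proc Act) : DerivEq E (.choice .nil p) p :=
  (add_comm hB _ _).trans (add_nil hB p)

lemma add_left_comm (p q r : Proc Act) :
    DerivEq E (.choice p (.choice q r)) (.choice q (.choice p r)) :=
  (add_assoc hB p q r).symm |>.trans (((add_comm hB p q).add (refl r)).trans (add_assoc hB q p r))

lemma sum_append (l l' : List (Proc Act)) :
    DerivEq E (Proc.sum (l ++ l')) (.choice (Proc.sum l) (Proc.sum l')) := by
  induction l with
  | nil => exact (nil_add hB _).symm
  | cons s l ih => exact ((refl s).add ih).trans (add_assoc hB _ _ _).symm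

lemma sum_summands (p : Proc Act) :
    DerivEq E p (Proc.sum (p.summands.map fun x => .pre x.1 x.2)) := by
  induction p with
  | nil => exact refl _
  | pre a p => exact (add_nil hB _).symm
  | choice p q ihp ihq =>
    simpa using (ihp.add ihq).trans (sum_append hB _ _).symm

lemma add_sum_of_mem {s : Proc Act} {l : List (Proc Act)} (h : s ∈ l) :
    DerivEq E (.choice s (Proc.sum l)) (Proc.sum l) := by
  induction h with
  | head l => exact (add_assoc hB s s _).symm.trans ((add_self hB s).add (refl _))
  | tail t _ ih => exact (add_left_comm hB s t _).trans ((refl t).add ih)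

lemma sum_add_sum_of_subset {l l' : List (Proc Act)} (h : l ⊆ l') :
    DerivEq E (.choice (Proc.sum l) (Proc.sum l')) (Proc.sum l') := by
  induction l with
  | nil => exact nil_add hB _
  | cons s l ih =>
    have hl : l ⊆ l' := fun x hx => h (List.mem_cons_of_mem s hx)
    exact (add_assoc hB _ _ _).trans (((refl s).add (ih hl)).trans
      (add_sum_of_mem hB (h List.mem_cons_self)))

lemma sum_of_subset_of_subset {l l' : List (Proc Act)} (h : l ⊆ l') (h' : l' ⊆ l) :
    DerivEq E (Proc.sum l) (Proc.sum l') :=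
  (sum_add_sum_of_subset hB h').symm.trans ((add_comm hB _ _).trans (sum_add_sum_of_subset hB h))

lemma of_summands_subset_of_subset {p q : Proc Act} (h : p.summands ⊆ q.summands)
    (h' : q.summands ⊆ p.summands) : DerivEq E p q := by
  refine (sum_summands hB p).trans (DerivEq.trans ?_ (sum_summands hB q).symm)
  exact sum_of_subset_of_subset hB (List.map_subset _ h) (List.map_subset _ h')

end DerivEq

lemma Deriv.le_add_of_initials_eq {p q : Proc Act} (h : p.initials = q.initials) :
    Deriv E p (.choice p q) := .ax (hB (.RS p q h))

lemma DerivEq.restrict_add (A : Set Act) (q : Proc Act) :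
    DerivEq E (.choice (q.restrict A) q) q := by
  refine of_summands_subset_of_subset hB (fun x hx => ?_) (fun x hx => by simp [hx])
  simp only [Proc.summands_choice, List.mem_append, Proc.mem_summands_restrict] at hx
  exact hx.elim And.left id

lemma Deriv.sum_map_pre_le_of_subset (a : Act) {L Q : List (Proc Act)} (hL : L ≠ [])
    (h : L ⊆ Q) : Deriv E (Proc.sum (L.map (.pre a))) (Proc.sum (Q.map (.pre a))) := by
  have hI : ∀ {K : List (Proc Act)}, K ≠ [] → (Proc.sum (K.map (.pre a))).initials = {a} := by
    intro K hK
    ext b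
    simpa [Proc.mem_initials_sum] using fun _ => List.exists_mem_of_ne_nil K hK
  have hQ : Q ≠ [] := List.ne_nil_of_mem (h (List.head_mem hL))
  exact (le_add_of_initials_eq hB ((hI hL).trans (hI hQ).symm)).trans
    (DerivEq.sum_add_sum_of_subset hB (List.map_subset _ h)).1

end Derivation

lemma obsFinal_cons {Act : Type} (X l : Set Act) (a : Act) (t : List (Act × Set Act)) :
    obsFinal (X, (a, l) :: t) = obsFinal (l, t) :=
  List.getLastD_cons ..

namespace LObs

variable {Act : Type}

inductive Matches (R F : Set Act → Set Act → Prop) : LObs Act (Set Act) → LObs Act (Set Act) → Prop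
  | nil {X Y : Set Act} : F X Y → Matches R F (X, []) (Y, [])
  | cons {X Y l m : Set Act} {a : Act} {t u : List (Act × Set Act)} :
      R X Y → Matches R F (l, t) (m, u) → Matches R F (X, (a, l) :: t) (Y, (a, m) :: u)

variable {R F : Set Act → Set Act → Prop}

@[simp] lemma matches_nil_nil {X Y : Set Act} : Matches R F (X, []) (Y, []) ↔ F X Y :=
  ⟨by rintro ⟨h⟩; exact h, .nil⟩

@[simp] lemma matches_cons_cons {X Y l m : Set Act} {a b : Act} {t u : List (Act × Set Act)} :
    Matches R F (X, (a, l) :: t) (Y, (b, m) :: u) ↔ R X Y ∧ a = b ∧ Matches R F (l, t) (m, u) :=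
  ⟨by rintro (_ | ⟨h, h'⟩); exact ⟨h, rfl, h'⟩, by rintro ⟨h, rfl, h'⟩; exact .cons h h'⟩

@[simp] lemma not_matches_nil_cons {X Y m : Set Act} {b : Act} {u : List (Act × Set Act)} :
    ¬ Matches R F (X, []) (Y, (b, m) :: u) := nofun

@[simp] lemma not_matches_cons_nil {X Y l : Set Act} {a : Act} {t : List (Act × Set Act)} :
    ¬ Matches R F (X, (a, l) :: t) (Y, []) := nofun

lemma Matches.refl (hR : ∀ X, R X X) (hF : ∀ X, F X X) : ∀ o : LObs Act (Set Act), Matches R F o o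
  | (X, []) => .nil (hF X)
  | (X, (_, l) :: t) => .cons (hR X) (Matches.refl hR hF (l, t))

lemma Matches.trans (hR : ∀ {X Y Z}, R X Y → R Y Z → R X Z)
    (hF : ∀ {X Y Z}, F X Y → F Y Z → F X Z) {o o' o'' : LObs Act (Set Act)}
    (h : Matches R F o o') (h' : Matches R F o' o'') : Matches R F o o'' := by
  induction h generalizing o'' with
  | nil h => rcases h' with ⟨h'⟩; exact .nil (hF h h')
  | cons h _ ih => rcases h' with _ | ⟨h', h''⟩; exact .cons (hR h h') (ih h'')

lemma matches_eq_iff {o o' : LObs Act (Set Act)} : Matches (· = ·) (· = ·) o o' ↔ o' = o := by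
  refine ⟨fun h => ?_, by rintro rfl; exact Matches.refl (fun _ => rfl) (fun _ => rfl) _⟩
  induction h with
  | nil h => rw [h]
  | cons h _ ih => simp_all

lemma matches_superset_iff {o o' : LObs Act (Set Act)} :
    Matches (· ⊇ ·) (· ⊇ ·) o o' ↔ obsGe o o' := by
  obtain ⟨X, l⟩ := o
  obtain ⟨Y, m⟩ := o'
  induction l generalizing X Y m with
  | nil => rcases m with _ | ⟨⟨b, m⟩, u⟩ <;> simp [obsGe]
  | cons x t ih =>
    obtain ⟨a, l⟩ := x
    rcases m with _ | ⟨⟨b, m⟩, u⟩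
    · simp [obsGe]
    · simp only [matches_cons_cons, ih, obsGe, List.forall₂_cons]
      tauto

lemma matches_true_iff {o o' : LObs Act (Set Act)} : Matches (fun _ _ => True) F o o' ↔
    obsActs o' = obsActs o ∧ F (obsFinal o) (obsFinal o') := by
  obtain ⟨X, l⟩ := o
  obtain ⟨Y, m⟩ := o'
  induction l generalizing X Y m with
  | nil => rcases m with _ | ⟨⟨b, m⟩, u⟩ <;> simp [obsActs, obsFinal]
  | cons x t ih =>
    obtain ⟨a, l⟩ := x
    rcases m with _ | ⟨⟨b, m⟩, u⟩
    · simp [obsActs]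
    · simp only [matches_cons_cons, ih, true_and, obsFinal_cons]
      simp [obsActs, eq_comm, and_assoc]

end LObs

inductive Semantics
  | rt | ft | r | f

namespace Semantics

open Proc LObs

variable {Act : Type}

def inner : Semantics → Set Act → Set Act → Prop
  | rt => (· = ·)
  | ft => (· ⊇ ·)
  | r | f => fun _ _ => True

def final : Semantics → Set Act → Set Act → Prop
  | rt | r => (· = ·)
  | ft | f => (· ⊇ ·)

def M : Semantics → Proc Act → Proc Act → Proc Act → Prop
  | rt => M_RT
  | ft => M_FT
  | r => M_R
  | f => M_F

abbrev axioms (z : Semantics) : Proc Act → Proc Act → Prop :=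
  fun s t => BaseAx s t ∨ NDax z.M s t

def Le (z : Semantics) (p q : Proc Act) : Prop :=
  ∀ o ∈ p.lgo, ∃ o' ∈ q.lgo, Matches z.inner z.final o o'

variable {z : Semantics} {X Y Z X' Y' : Set Act}

lemma inner_refl (z : Semantics) (X : Set Act) : z.inner X X := by cases z <;> simp [inner]

lemma final_refl (z : Semantics) (X : Set Act) : z.final X X := by cases z <;> simp [final]

lemma inner_trans (h : z.inner X Y) (h' : z.inner Y Z) : z.inner X Z := by
  cases z
  case rt => exact Eq.trans h h'
  case ft => exact Set.Subset.trans h' h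
  all_goals trivial

lemma final_trans (h : z.final X Y) (h' : z.final Y Z) : z.final X Z := by
  cases z
  case rt | r => exact Eq.trans h h'
  case ft | f => exact Set.Subset.trans h' h

lemma inner_of_final (h : z.final X Y) : z.inner X Y := by
  cases z <;> simp_all [inner, final]

lemma subset_of_final (h : z.final X Y) : Y ⊆ X := by
  cases z <;> simp_all [final]

lemma inner_union (h : z.inner X Y) (h' : z.inner X' Y') : z.inner (X ∪ X') (Y ∪ Y') := by
  cases z
  case rt => exact congrArg₂ (· ∪ ·) h h'
  case ft => exact Set.union_subset_union h h'
  all_goals trivial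

lemma final_union (h : z.final X Y) (h' : z.final X' Y') : z.final (X ∪ X') (Y ∪ Y') := by
  cases z
  case rt | r => exact congrArg₂ (· ∪ ·) h h'
  case ft | f => exact Set.union_subset_union h h'

lemma le_rt_iff {p q : Proc Act} :
    rt.Le p q ↔ ∀ o, InLGO initials o p → InLGO initials o q := by
  simp only [Le, inner, final, matches_eq_iff, exists_eq_right]; rfl

lemma le_ft_iff {p q : Proc Act} :
    ft.Le p q ↔ ∀ o, InLGO initials o p → ∃ o', InLGO initials o' q ∧ obsGe o o' := by
  simp only [Le, inner, final, matches_superset_iff]; rfl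

lemma le_r_iff {p q : Proc Act} :
    r.Le p q ↔ ∀ o, InLGO initials o p →
      ∃ o', InLGO initials o' q ∧ obsActs o' = obsActs o ∧ obsFinal o' = obsFinal o := by
  simp only [Le, inner, final, matches_true_iff]
  exact forall₂_congr fun _ _ => exists_congr fun _ => and_congr_right fun _ =>
    and_congr_right fun _ => eq_comm

lemma le_f_iff {p q : Proc Act} :
    f.Le p q ↔ ∀ o, InLGO initials o p →
      ∃ o', InLGO initials o' q ∧ obsActs o' = obsActs o ∧ obsFinal o' ⊆ obsFinal o := by
  simp only [Le, inner, final, matches_true_iff]; rfl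

lemma le_refl (z : Semantics) (p : Proc Act) : z.Le p p :=
  fun o ho => ⟨o, ho, Matches.refl z.inner_refl z.final_refl o⟩

lemma Le.trans {p q r : Proc Act} (h : z.Le p q) (h' : z.Le q r) : z.Le p r := fun o ho =>
  let ⟨o', ho', hm⟩ := h o ho
  let ⟨o'', ho'', hm'⟩ := h' o' ho'
  ⟨o'', ho'', Matches.trans (R := z.inner) (F := z.final) inner_trans final_trans hm hm'⟩

lemma le_of_lgo_subset {p q : Proc Act} (h : p.lgo ⊆ q.lgo) : z.Le p q :=
  fun o ho => ⟨o, h ho, Matches.refl z.inner_refl z.final_refl o⟩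

lemma final_initials_of_matches_nil {p q : Proc Act} {o' : LObs Act (Set Act)} (ho' : o' ∈ q.lgo)
    (hm : Matches z.inner z.final (p.initials, []) o') : z.final p.initials q.initials := by
  rcases hm with ⟨hm⟩
  rwa [← mem_lgo_nil_iff.mp ho']

lemma Le.final_initials {p q : Proc Act} (h : z.Le p q) : z.final p.initials q.initials :=
  let ⟨_, ho', hm⟩ := h _ (nil_mem_lgo p)
  final_initials_of_matches_nil ho' hm

lemma Le.exists_cons {p q : Proc Act} (h : z.Le p q) {a : Act} {l : Set Act}
    {t : List (Act × Set Act)} (ho : (p.initials, (a, l) :: t) ∈ p.lgo) :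
    ∃ m u, (q.initials, (a, m) :: u) ∈ q.lgo ∧ z.inner p.initials q.initials ∧
      Matches z.inner z.final (l, t) (m, u) := by
  obtain ⟨⟨Y, _ | ⟨⟨b, m⟩, u⟩⟩, hq, hm⟩ := h _ ho
  · simp at hm
  · obtain ⟨hR, rfl, hm'⟩ := matches_cons_cons.mp hm
    obtain rfl := (mem_lgo_cons_iff.mp hq).1
    exact ⟨m, u, hq, hR, hm'⟩

lemma Le.pre {p q : Proc Act} (h : z.Le p q) (a : Act) : z.Le (.pre a p) (.pre a q) := by
  rintro ⟨X, _ | ⟨⟨b, l⟩, t⟩⟩ ho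
  · rw [mem_lgo_nil_iff] at ho
    exact ⟨_, nil_mem_lgo _, by simpa [ho] using final_refl z {a}⟩
  · obtain ⟨rfl, p', hs, ht⟩ := mem_lgo_cons_iff.mp ho
    cases hs
    obtain ⟨⟨m, u⟩, hu, hm⟩ := h _ ht
    exact ⟨_, mem_lgo_cons_iff.mpr ⟨rfl, q, .pre a q, hu⟩, .cons (by simpa using inner_refl z _) hm⟩

lemma Le.add {p q p' q' : Proc Act} (h : z.Le p q) (h' : z.Le p' q') :
    z.Le (.choice p p') (.choice q q') := by
  have hI := h.final_initials
  have hI' := h'.final_initials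
  rintro ⟨X, _ | ⟨⟨a, l⟩, t⟩⟩ ho
  · rw [mem_lgo_nil_iff] at ho
    exact ⟨_, nil_mem_lgo _, by simpa [ho] using final_union hI hI'⟩
  obtain ⟨rfl, hp | hp⟩ := mem_lgo_choice_cons_iff.mp ho
  · obtain ⟨m, u, hq, hR, hm⟩ := h.exists_cons hp
    exact ⟨_, mem_lgo_choice_cons_iff.mpr ⟨rfl, .inl hq⟩,
      .cons (inner_union hR (inner_of_final hI')) hm⟩
  · obtain ⟨m, u, hq, hR, hm⟩ := h'.exists_cons hp
    exact ⟨_, mem_lgo_choice_cons_iff.mpr ⟨rfl, .inr hq⟩,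
      .cons (inner_union (inner_of_final hI) hR) hm⟩

lemma le_of_baseAx {p q : Proc Act} (h : BaseAx p q) : z.Le p q := by
  refine le_of_lgo_subset ?_
  cases h
  case RS h => exact lgo_subset_choice_of_initials_eq h
  all_goals
    refine (lgo_eq_of_summands_subset_of_subset ?_ ?_).le <;> intro x <;>
      simp only [summands_choice, summands_nil, List.mem_append, List.not_mem_nil] <;> tauto

lemma final_of_M {x y r : Proc Act} (hM : z.M x y r) :
    z.final (x.initials ∪ y.initials) x.initials := by
  cases z
  case rt => exact (congrArg (x.initials ∪ ·) hM.1.symm).trans (Set.union_self _)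
  case ft | f => exact Set.subset_union_left
  case r => exact Set.union_eq_self_of_subset_right hM

lemma inner_of_M {x y r : Proc Act} (hM : z.M x y r) :
    z.inner (x.initials ∪ y.initials) (y.initials ∪ r.initials) := by
  cases z
  case rt => show _ = _; rw [Set.union_eq_self_of_subset_right hM.2, hM.1, Set.union_self]
  case ft => exact (Set.union_eq_self_of_subset_right hM).symm ▸ Set.subset_union_right
  all_goals trivial

lemma le_of_nd {x y r : Proc Act} (a : Act) (hM : z.M x y r) :
    z.Le (.pre a (.choice x y)) (.choice (.pre a x) (.pre a (.choice y r))) := by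
  have hI : (choice (pre a x) (pre a (choice y r))).initials = (pre a (choice x y)).initials := by
    simp
  rintro ⟨X, _ | ⟨⟨b, l⟩, t⟩⟩ ho
  · rw [mem_lgo_nil_iff] at ho
    exact ⟨_, nil_mem_lgo _, by simpa [ho, hI] using final_refl z _⟩
  obtain ⟨rfl, p', hs, ht⟩ := mem_lgo_cons_iff.mp ho
  cases hs
  rcases t with _ | ⟨⟨c, l'⟩, t⟩
  · rw [mem_lgo_nil_iff] at ht
    refine ⟨_, mem_lgo_cons_iff.mpr ⟨rfl, x, .left _ (.pre a x), nil_mem_lgo x⟩, ?_⟩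
    exact .cons (hI ▸ inner_refl z _) (.nil (by simpa [ht] using final_of_M hM))
  obtain ⟨rfl, hx | hy⟩ := mem_lgo_choice_cons_iff.mp ht
  · refine ⟨_, mem_lgo_cons_iff.mpr ⟨rfl, x, .left _ (.pre a x), hx⟩, ?_⟩
    exact .cons (hI ▸ inner_refl z _)
      (.cons (inner_of_final (final_of_M hM)) (Matches.refl z.inner_refl z.final_refl _))
  · have hyr := (mem_lgo_choice_cons_iff (q := r)).mpr ⟨rfl, .inl hy⟩
    refine ⟨_, mem_lgo_cons_iff.mpr ⟨rfl, _, .right _ (.pre a _), hyr⟩, ?_⟩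
    exact .cons (hI ▸ inner_refl z _)
      (.cons (inner_of_M hM) (Matches.refl z.inner_refl z.final_refl _))

theorem le_of_deriv {p q : Proc Act} (h : Deriv z.axioms p q) : z.Le p q := by
  induction h with
  | ax h =>
    rcases h with h | ⟨a, x, y, r, hM, rfl, rfl⟩
    exacts [le_of_baseAx h, le_of_nd a hM]
  | refl p => exact le_refl z p
  | trans _ _ ih ih' => exact ih.trans ih'
  | pre a _ ih => exact ih.pre a
  | add _ _ ih ih' => exact ih.add ih'

def Covers (z : Semantics) (Q : List (Proc Act)) (p : Proc Act) : Prop :=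
  ∀ o ∈ p.lgo, ∃ q ∈ Q, ∃ o' ∈ q.lgo, Matches z.inner z.final o o'

lemma Le.covers {p q : Proc Act} (h : z.Le p q) : z.Covers [q] p := fun o ho =>
  let ⟨o', ho', hm⟩ := h o ho
  ⟨q, List.mem_singleton_self q, o', ho', hm⟩

lemma inner_initials_of_matches {p q : Proc Act} {o o' : LObs Act (Set Act)} (ho : o ∈ p.lgo)
    (ho' : o' ∈ q.lgo) (hm : Matches z.inner z.final o o') : z.inner p.initials q.initials := by
  cases hm with
  | nil h =>
    rw [mem_lgo_nil_iff] at ho ho'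
    exact ho ▸ ho' ▸ inner_of_final h
  | cons h _ => exact (mem_lgo_cons_iff.mp ho).1 ▸ (mem_lgo_cons_iff.mp ho').1 ▸ h

lemma Covers.derivs {Q : List (Proc Act)} {p p' : Proc Act} {b : Act} (h : z.Covers Q p)
    (hs : Step p b p') : z.Covers (Q.flatMap (derivs b)) p' := by
  rintro ⟨l, t⟩ ho
  obtain ⟨q, hq, ⟨Y, _ | ⟨⟨c, m⟩, u⟩⟩, ho', hm⟩ := h _ (mem_lgo_cons_iff.mpr ⟨rfl, _, hs, ho⟩)
  · simp at hm
  · obtain ⟨-, rfl, hm'⟩ := matches_cons_cons.mp hm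
    obtain ⟨-, q', hs', hu⟩ := mem_lgo_cons_iff.mp ho'
    exact ⟨q', List.mem_flatMap.mpr ⟨q, hq, mem_derivs.mpr hs'⟩, _, hu, hm'⟩

lemma deriv_sum_restrict_of_covers {E : Proc Act → Proc Act → Prop}
    (hB : ∀ {s t : Proc Act}, BaseAx s t → E s t) {L : List (Proc Act)} {p : Proc Act}
    (hL : z.Covers L p)
    (ih : ∀ b p', Step p b p' → ∀ Q, z.Covers Q p' → Deriv E (.pre b p') (sum (Q.map (.pre b)))) :
    Deriv E p (sum (L.map (restrict p.initials))) := by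
  have hsum := Deriv.sum_map (E := E) (f := fun x : Act × Proc Act => .pre x.1 x.2)
    (g := fun x : Act × Proc Act => sum ((L.flatMap (derivs x.1)).map (.pre x.1))) fun x hx =>
      ih x.1 x.2 (step_iff_mem_summands.mpr hx) _ (hL.derivs (step_iff_mem_summands.mpr hx))
  refine (DerivEq.sum_summands hB p).1.trans (hsum.trans
    (DerivEq.of_summands_subset_of_subset hB (fun x hx => ?_) (fun x hx => ?_)).1)
  all_goals simp only [summands_sum, List.mem_flatMap, List.mem_map, Prod.exists, exists_and_right,
    exists_exists_and_eq_and, mem_derivs, step_iff_mem_summands, summands_pre, List.mem_cons,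
    List.not_mem_nil, or_false, mem_summands_restrict, mem_initials_iff] at hx ⊢
  · obtain ⟨b, ⟨p', hp'⟩, q', ⟨q, hq, hq'⟩, rfl⟩ := hx
    exact ⟨q, hq, hq', p', hp'⟩
  · obtain ⟨q, hq, hx, p', hp'⟩ := hx
    exact ⟨x.1, ⟨p', hp'⟩, x.2, ⟨q, hq, hx⟩, rfl⟩

lemma M_restrict {A B : Set Act} {x r : Proc Act} (hAB : z.final A B) (hBx : B ⊆ x.initials)
    (hxA : x.initials ⊆ A) (hr : z.inner A r.initials) : z.M x (r.restrict A) r := by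
  have hW := initials_restrict A r
  cases z
  case rt =>
    have hrA : r.initials ∩ A = A := by rw [← hr, Set.inter_self]
    exact ⟨by rw [hW, hrA]; exact hxA.antisymm (hAB ▸ hBx), by rw [hW, hrA, hr]⟩
  case ft =>
    show r.initials ⊆ (r.restrict A).initials
    exact hW ▸ Set.subset_inter le_rfl hr
  case r =>
    show (r.restrict A).initials ⊆ x.initials
    exact hW ▸ Set.inter_subset_right.trans (hAB ▸ hBx)
  case f => trivial

lemma pre_sum_restrict_le {A : Set Act} {q₀ : Proc Act} (h₀ : z.final A q₀.initials) (a : Act)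
    (J : List (Proc Act)) (hJ : ∀ q ∈ J, z.inner A q.initials) :
    Deriv z.axioms (.pre a (sum ((q₀ :: J).map (restrict A)))) (sum ((q₀ :: J).map (.pre a))) := by
  have hB : ∀ {s t : Proc Act}, BaseAx s t → z.axioms s t := .inl
  induction J with
  | nil =>
    have hI : (q₀.restrict A).initials = q₀.initials := by
      rw [initials_restrict, Set.inter_eq_left.mpr (subset_of_final h₀)]
    exact (((DerivEq.add_nil hB _).1.trans ((Deriv.le_add_of_initials_eq hB hI).trans
      (DerivEq.restrict_add hB A q₀).1)).pre a).trans (DerivEq.add_nil hB _).2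
  | cons q J ih =>
    set X := sum ((q₀ :: J).map (restrict A))
    have hq₀X : q₀.initials ⊆ X.initials := fun b hb =>
      mem_initials_sum.mpr ⟨q₀.restrict A, List.mem_cons_self,
        by rw [initials_restrict]; exact ⟨hb, subset_of_final h₀ hb⟩⟩
    have hXA : X.initials ⊆ A := fun b hb => by
      obtain ⟨_, hs, hb⟩ := mem_initials_sum.mp hb
      obtain ⟨q', -, rfl⟩ := List.mem_map.mp hs
      exact (initials_restrict A q' ▸ hb).2
    have hM := M_restrict h₀ hq₀X hXA (hJ q List.mem_cons_self)
    have hsplit : DerivEq z.axioms (sum ((q₀ :: q :: J).map (restrict A)))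
        (.choice X (q.restrict A)) :=
      DerivEq.of_summands_subset_of_subset hB (fun x hx => by simp [X] at hx ⊢; aesop)
        (fun x hx => by simp [X] at hx ⊢; aesop)
    have hmerge : DerivEq z.axioms (.choice (sum ((q₀ :: J).map (.pre a))) (.pre a q))
        (sum ((q₀ :: q :: J).map (.pre a))) :=
      DerivEq.of_summands_subset_of_subset hB (fun x hx => by simp at hx ⊢; aesop)
        (fun x hx => by simp at hx ⊢; aesop)
    have hnd : Deriv z.axioms (.pre a (.choice X (q.restrict A)))
        (.choice (.pre a X) (.pre a (.choice (q.restrict A) q))) :=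
      .ax (.inr ⟨a, X, q.restrict A, q, hM, rfl, rfl⟩)
    have hJ' : ∀ q' ∈ J, z.inner A q'.initials := fun q' hq' => hJ q' (List.mem_cons_of_mem q hq')
    have hrest := (ih hJ').add ((DerivEq.restrict_add hB A q).1.pre a)
    exact (hsplit.1.pre a).trans (hnd.trans (hrest.trans hmerge.1))

open Classical in
theorem pre_le_sum_pre (z : Semantics) (a : Act) (p : Proc Act) (Q : List (Proc Act))
    (hQ : z.Covers Q p) : Deriv z.axioms (.pre a p) (sum (Q.map (.pre a))) := by
  obtain ⟨q₀, hq₀, o', ho', hm⟩ := hQ _ (nil_mem_lgo p)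
  set J := Q.filter fun q => z.inner p.initials q.initials
  have hL : z.Covers (q₀ :: J) p := fun o ho => by
    obtain ⟨q, hq, o', ho', hm⟩ := hQ o ho
    exact ⟨q, List.mem_cons_of_mem _ (List.mem_filter.mpr
      ⟨hq, decide_eq_true (inner_initials_of_matches ho ho' hm)⟩), o', ho', hm⟩
  have hsplit := deriv_sum_restrict_of_covers .inl hL fun b p' hs Q' hQ' =>
    pre_le_sum_pre z b p' Q' hQ'
  have hchain := pre_sum_restrict_le (final_initials_of_matches_nil ho' hm) a J
    fun q hq => of_decide_eq_true (List.mem_filter.mp hq).2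
  have hJQ : q₀ :: J ⊆ Q := List.cons_subset.mpr ⟨hq₀, List.filter_subset_self Q⟩
  exact (hsplit.pre a).trans (hchain.trans
    (Deriv.sum_map_pre_le_of_subset .inl a (List.cons_ne_nil _ _) hJQ))
termination_by p
decreasing_by exact sizeOf_lt_of_step hs

theorem deriv_of_le {p q : Proc Act} (h : z.Le p q) : Deriv z.axioms p q := by
  have hB : ∀ {s t : Proc Act}, BaseAx s t → z.axioms s t := .inl
  have hI : (q.restrict p.initials).initials = q.initials := by
    rw [initials_restrict, Set.inter_eq_left.mpr (subset_of_final h.final_initials)]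
  have hsplit := deriv_sum_restrict_of_covers hB h.covers fun b p' _ Q hQ =>
    pre_le_sum_pre z b p' Q hQ
  exact hsplit.trans ((DerivEq.add_nil hB _).1.trans ((Deriv.le_add_of_initials_eq hB hI).trans
    (DerivEq.restrict_add hB _ q).1))

theorem le_iff_deriv {p q : Proc Act} : z.Le p q ↔ Deriv z.axioms p q :=
  ⟨deriv_of_le, le_of_deriv⟩

end Semantics

/-- soundness and completeness of the unified axiomatizations:
for each `Z ∈ {RT, FT, R, F}`, `LGO_I(p) ≤^{l(Z)} LGO_I(q)` iff
`p ≼ q` is derivable from `{B1–B4, (RS), (ND^Z)}`. -/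
theorem stmt14 {Act : Type} (p q : Proc Act) :
    ((∀ o, InLGO Proc.initials o p → InLGO Proc.initials o q) ↔
        Deriv (fun s t => BaseAx s t ∨ NDax M_RT s t) p q) ∧
    ((∀ o, InLGO Proc.initials o p →
        ∃ o', InLGO Proc.initials o' q ∧ obsGe o o') ↔
        Deriv (fun s t => BaseAx s t ∨ NDax M_FT s t) p q) ∧
    ((∀ o, InLGO Proc.initials o p →
        ∃ o', InLGO Proc.initials o' q ∧ obsActs o' = obsActs o ∧
          obsFinal o' = obsFinal o) ↔
        Deriv (fun s t => BaseAx s t ∨ NDax M_R s t) p q) ∧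
    ((∀ o, InLGO Proc.initials o p →
        ∃ o', InLGO Proc.initials o' q ∧ obsActs o' = obsActs o ∧
          obsFinal o' ⊆ obsFinal o) ↔
        Deriv (fun s t => BaseAx s t ∨ NDax M_F s t) p q) :=
  ⟨Semantics.le_rt_iff.symm.trans Semantics.le_iff_deriv,
    Semantics.le_ft_iff.symm.trans Semantics.le_iff_deriv,
    Semantics.le_r_iff.symm.trans Semantics.le_iff_deriv,
    Semantics.le_f_iff.symm.trans Semantics.le_iff_deriv⟩
end

section
/- The axiom systems {B1–B4, (CS), (ND^FT)} and {B1–B4, (CS), (ND^F)} are logically equivalent: they derive exactly the same closed inequations. Here (CS) is the scheme p ≼ p + q whenever (I(p) = ∅ ⇔ I(q) = ∅), (ND^FT) is the scheme a·(p + q) ≼ a·p + a·(q + r) whenever I(r) ⊆ I(q), and (ND^F) is the unconditional scheme a·(p + q) ≼ a·p + a·(q + r). -/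
/-- The axioms B1–B4 (as pairs of inequations) together with the
complete-simulation axiom (CS): `p ≼ p + q` whenever `(I(p) = ∅ ⇔ I(q) = ∅)`. -/
inductive BaseCSAx {Act : Type} : Proc Act → Proc Act → Prop where
  | B1 (p q : Proc Act) : BaseCSAx (Proc.choice p q) (Proc.choice q p)
  | B2l (p q r : Proc Act) :
      BaseCSAx (Proc.choice (Proc.choice p q) r) (Proc.choice p (Proc.choice q r))
  | B2r (p q r : Proc Act) :
      BaseCSAx (Proc.choice p (Proc.choice q r)) (Proc.choice (Proc.choice p q) r)
  | B3l (p : Proc Act) : BaseCSAx (Proc.choice p p) p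
  | B3r (p : Proc Act) : BaseCSAx p (Proc.choice p p)
  | B4l (p : Proc Act) : BaseCSAx (Proc.choice p Proc.nil) p
  | B4r (p : Proc Act) : BaseCSAx p (Proc.choice p Proc.nil)
  | CS (p q : Proc Act) : (Proc.initials p = ∅ ↔ Proc.initials q = ∅) →
      BaseCSAx p (Proc.choice p q)

section Aux
variable {Act : Type}

lemma initials_pre_ne (a : Act) (p : Proc Act) : Proc.initials (Proc.pre a p) ≠ ∅ := by
  intro h
  have : a ∈ Proc.initials (Proc.pre a p) := ⟨p, Proc.Step.pre a p⟩
  rw [h] at this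
  exact this

lemma initials_choice (p q : Proc Act) :
    Proc.initials (Proc.choice p q) = Proc.initials p ∪ Proc.initials q := by
  ext a
  constructor
  · rintro ⟨p', hstep⟩
    cases hstep with
    | left _ h => exact Or.inl ⟨_, h⟩
    | right _ h => exact Or.inr ⟨_, h⟩
  · rintro (⟨p', h⟩ | ⟨q', h⟩)
    · exact ⟨p', Proc.Step.left _ h⟩
    · exact ⟨q', Proc.Step.right _ h⟩

abbrev EFT : Proc Act → Proc Act → Prop := fun s t => BaseCSAx s t ∨ NDax M_FT s t

lemma deriv_nil_of_empty {q : Proc Act} (h : Proc.initials q = ∅) :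
    Deriv (EFT (Act := Act)) q Proc.nil := by
  induction q with
  | nil => exact Deriv.refl _
  | pre a p ih => exact absurd h (initials_pre_ne a p)
  | choice q1 q2 ih1 ih2 =>
    rw [initials_choice] at h
    have h1 : Proc.initials q1 = ∅ := by
      have := Set.union_empty_iff.mp h
      exact this.1
    have h2 : Proc.initials q2 = ∅ := by
      have := Set.union_empty_iff.mp h
      exact this.2
    exact Deriv.trans (Deriv.add (ih1 h1) (ih2 h2)) (Deriv.ax (Or.inl (BaseCSAx.B4l _)))

lemma ndF_derivable (a : Act) (p q r : Proc Act) :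
    Deriv (EFT (Act := Act)) (Proc.pre a (Proc.choice p q))
      (Proc.choice (Proc.pre a p) (Proc.pre a (Proc.choice q r))) := by
  by_cases hr : Proc.initials r = ∅
  · -- I(r) ⊆ I(q), use ND^FT directly
    exact Deriv.ax (Or.inr ⟨a, p, q, r, by show Proc.initials r ⊆ Proc.initials q; rw [hr]; exact Set.empty_subset _, rfl, rfl⟩)
  · by_cases hq : Proc.initials q = ∅
    · -- q ≃ 0: a(p+q) ≼ a(p+0) ≼ ap ≼ ap + a(q+r)
      have h1 : Deriv (EFT (Act := Act)) (Proc.pre a (Proc.choice p q)) (Proc.pre a p) :=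
        Deriv.pre a (Deriv.trans (Deriv.add (Deriv.refl p) (deriv_nil_of_empty hq))
          (Deriv.ax (Or.inl (BaseCSAx.B4l p))))
      have h2 : Deriv (EFT (Act := Act)) (Proc.pre a p)
          (Proc.choice (Proc.pre a p) (Proc.pre a (Proc.choice q r))) :=
        Deriv.ax (Or.inl (BaseCSAx.CS _ _
          (iff_of_false (initials_pre_ne a p) (initials_pre_ne a _))))
      exact Deriv.trans h1 h2
    · -- both nonempty: a(p+q) ≼ ap + a(q+q) ≼ ap + aq ≼ ap + a(q+r)
      have h1 : Deriv (EFT (Act := Act)) (Proc.pre a (Proc.choice p q))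
          (Proc.choice (Proc.pre a p) (Proc.pre a (Proc.choice q q))) :=
        Deriv.ax (Or.inr ⟨a, p, q, q, Set.Subset.refl _, rfl, rfl⟩)
      have h2 : Deriv (EFT (Act := Act))
          (Proc.choice (Proc.pre a p) (Proc.pre a (Proc.choice q q)))
          (Proc.choice (Proc.pre a p) (Proc.pre a q)) :=
        Deriv.add (Deriv.refl _) (Deriv.pre a (Deriv.ax (Or.inl (BaseCSAx.B3l q))))
      have h3 : Deriv (EFT (Act := Act)) (Proc.choice (Proc.pre a p) (Proc.pre a q))
          (Proc.choice (Proc.pre a p) (Proc.pre a (Proc.choice q r))) :=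
        Deriv.add (Deriv.refl _)
          (Deriv.pre a (Deriv.ax (Or.inl (BaseCSAx.CS q r (iff_of_false hq hr)))))
      exact Deriv.trans h1 (Deriv.trans h2 h3)

end Aux

/-- the axiom systems `{B1–B4, (CS), (ND^FT)}` and
`{B1–B4, (CS), (ND^F)}` derive the same closed inequations. -/
theorem stmt17 {Act : Type} (p q : Proc Act) :
    Deriv (fun s t => BaseCSAx s t ∨ NDax M_FT s t) p q ↔
      Deriv (fun s t => BaseCSAx s t ∨ NDax M_F s t) p q := by
  constructor
  · intro h
    induction h with
    | ax h =>
      rcases h with h | ⟨a, p', q', r', _, h1, h2⟩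
      · exact Deriv.ax (Or.inl h)
      · exact Deriv.ax (Or.inr ⟨a, p', q', r', trivial, h1, h2⟩)
    | refl p => exact Deriv.refl p
    | trans _ _ ih1 ih2 => exact Deriv.trans ih1 ih2
    | pre a _ ih => exact Deriv.pre a ih
    | add _ _ ih1 ih2 => exact Deriv.add ih1 ih2
  · intro h
    induction h with
    | ax h =>
      rcases h with h | ⟨a, p', q', r', _, h1, h2⟩
      · exact Deriv.ax (Or.inl h)
      · subst h1; subst h2; exact ndF_derivable a p' q' r'
    | refl p => exact Deriv.refl p
    | trans _ _ ih1 ih2 => exact Deriv.trans ih1 ih2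
    | pre a _ ih => exact Deriv.pre a ih
    | add _ _ ih1 ih2 => exact Deriv.add ih1 ih2
end
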